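/- Let a and b be Wiener-class sequences and let c := a⋆b be their convolution. Then both T(a)T(b) − T(c) and T(b)T(a) − T(c) have the decay property, where the products are the entrywise matrix products (T(a)T(b))_{ij} = ∑_{k≥1} a_{k−i} b_{j−k}. -/
import Mathlib


open Filter Topology

/-- Every row of `A` is absolutely summable. -/
def RowsSummable (A : ℕ → ℕ → ℝ) : Prop := ∀ i, Summable fun j => |A i j|

/-- The infinity norm of a semi-infinite matrix: the supremum of the row sums. -/
noncomputable def normInf (A : ℕ → ℕ → ℝ) : ℝ := ⨆ i, ∑' j, |A i j|

/-- `A` is bounded: all row sums are finite and their supremum is finite. -/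
def MatBounded (A : ℕ → ℕ → ℝ) : Prop :=
  RowsSummable A ∧ BddAbove (Set.range fun i => ∑' j, |A i j|)

/-- `A` has the decay property: all row sums are finite and tend to zero. -/
def HasDecay (A : ℕ → ℕ → ℝ) : Prop :=
  RowsSummable A ∧ Tendsto (fun i => ∑' j, |A i j|) atTop (𝓝 0)

/-- The semi-infinite Toeplitz matrix associated with a two-sided sequence:
`T(a)_{ij} = a_{j−i}`. -/
noncomputable def Toep (a : ℤ → ℝ) : ℕ → ℕ → ℝ := fun i j => a ((j : ℤ) - (i : ℤ))

/-- Convolution of two-sided sequences. -/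
noncomputable def zconv (a b : ℤ → ℝ) : ℤ → ℝ := fun n => ∑' k : ℤ, a k * b (n - k)

set_option maxHeartbeats 1000000 in
lemma zconv_comm (a b : ℤ → ℝ) : zconv a b = zconv b a := by
  funext n
  unfold zconv
  rw [← (Equiv.subLeft n).tsum_eq (fun k => b k * a (n - k))]
  refine tsum_congr fun k => ?_
  simp only [Equiv.subLeft_apply]
  rw [mul_comm]
  congr 1
  ring_nf

lemma mainDecay (a b : ℤ → ℝ) (ha : Summable fun n => |a n|)
    (hb : Summable fun n => |b n|) :
    HasDecay (fun i j => (∑' k, Toep a i k * Toep b k j) - Toep (zconv a b) i j) := by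
  set Cb : ℝ := ∑' n : ℤ, |b n| with hCbdef
  have hCb : ∀ m : ℤ, |b m| ≤ Cb := fun m => Summable.le_tsum hb m (fun _ _ => abs_nonneg _)
  set A : ℕ → ℝ := fun n => |a (-(n : ℤ) - 1)| with hAdef
  have hA : Summable A := ha.comp_injective (by intro x y hxy; simpa using hxy)
  set B : ℕ → ℝ := fun n => |b (n : ℤ)| with hBdef
  have hB : Summable B := hb.comp_injective (by exact_mod_cast Nat.cast_injective)
  set Cb' : ℝ := ∑' n, B n with hCb'def
  -- key pointwise identity
  have key : ∀ i j : ℕ,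
      (∑' k, Toep a i k * Toep b k j) - Toep (zconv a b) i j
        = - ∑' n : ℕ, a (-(n : ℤ) - 1 - i) * b ((j : ℤ) + n + 1) := by
    intro i j
    set h : ℤ → ℝ := fun k => a (k - i) * b ((j : ℤ) - k) with hh
    have hsummable : Summable h := by
      apply Summable.of_abs
      refine Summable.of_nonneg_of_le (fun k => abs_nonneg _) (fun k => ?_)
        ((((Equiv.subRight (i : ℤ)).summable_iff).2 ha).mul_right Cb)
      rw [hh]
      simp only [abs_mul, Equiv.subRight_apply]
      exact mul_le_mul_of_nonneg_left (hCb _) (abs_nonneg _)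
    have h1 : Toep (zconv a b) i j = ∑' k : ℤ, h k := by
      show zconv a b ((j : ℤ) - i) = _
      unfold zconv
      rw [← (Equiv.subRight (i : ℤ)).tsum_eq (fun k => a k * b ((j : ℤ) - (i : ℤ) - k))]
      refine tsum_congr fun k => ?_
      simp only [Equiv.subRight_apply, hh]
      congr 1
      ring_nf
    have hpos : Summable fun n : ℕ => h n := hsummable.comp_injective (fun x y hxy => by exact_mod_cast hxy)
    have hneg : Summable fun n : ℕ => h (-((n : ℤ) + 1)) :=
      hsummable.comp_injective (fun x y hxy => by
        simp only [neg_inj, add_left_inj] at hxy; exact_mod_cast hxy)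
    have h2 : ∑' k : ℤ, h k = (∑' n : ℕ, h n) + ∑' n : ℕ, h (-((n : ℤ) + 1)) :=
      tsum_of_nat_of_neg_add_one hpos hneg
    have h3 : (∑' n : ℕ, h (-((n : ℤ) + 1)))
        = ∑' n : ℕ, a (-(n : ℤ) - 1 - i) * b ((j : ℤ) + n + 1) := by
      refine tsum_congr fun n => ?_
      simp only [hh]
      have e1 : (-((n : ℤ) + 1) - i) = (-(n : ℤ) - 1 - i) := by ring
      have e2 : ((j : ℤ) - -((n : ℤ) + 1)) = ((j : ℤ) + n + 1) := by ring
      rw [e1, e2]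
    have h4 : (∑' k, Toep a i k * Toep b k j) = ∑' n : ℕ, h n := by
      refine tsum_congr fun n => ?_
      simp [hh, Toep]
    rw [h1, h2, h3, h4]
    ring
  -- per-row bounds
  have Hrow : ∀ i : ℕ,
      (Summable fun j => |(∑' k, Toep a i k * Toep b k j) - Toep (zconv a b) i j|) ∧
      (∑' j, |(∑' k, Toep a i k * Toep b k j) - Toep (zconv a b) i j|)
        ≤ (∑' m, A (m + i)) * Cb' := by
    intro i
    set F : ℕ × ℕ → ℝ := fun p => A (p.1 + i) * B (p.2 + (p.1 + 1)) with hFdef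
    have hFnonneg : ∀ p, 0 ≤ F p := fun p => mul_nonneg (abs_nonneg _) (abs_nonneg _)
    have htail : ∀ m : ℕ, (∑' j, B (j + (m + 1))) ≤ Cb' := by
      intro m
      have := Summable.sum_add_tsum_nat_add (f := B) (m + 1) hB
      have hnn : 0 ≤ ∑ n ∈ Finset.range (m + 1), B n :=
        Finset.sum_nonneg fun _ _ => abs_nonneg _
      linarith
    have htail0 : ∀ m : ℕ, 0 ≤ (∑' j, B (j + (m + 1))) :=
      fun m => tsum_nonneg fun _ => abs_nonneg _
    have hArow : Summable fun m => A (m + i) := (summable_nat_add_iff i).2 hA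
    have hFrow2 : Summable fun m => ∑' j, F (m, j) := by
      refine Summable.of_nonneg_of_le (fun m => tsum_nonneg fun j => hFnonneg _)
        (fun m => ?_) (hArow.mul_right Cb')
      have : (∑' j, F (m, j)) = A (m + i) * ∑' j, B (j + (m + 1)) := by
        simp only [hFdef]; exact tsum_mul_left
      rw [this]
      exact mul_le_mul_of_nonneg_left (htail m) (abs_nonneg _)
    have hF : Summable F := by
      refine (summable_prod_of_nonneg hFnonneg).2 ⟨fun m => ?_, hFrow2⟩
      have h5 : Summable fun j => B (j + (m + 1)) := (summable_nat_add_iff (m + 1)).2 hB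
      simpa only [hFdef] using h5.mul_left (A (m + i))
    have hFs : Summable (fun p : ℕ × ℕ => F (p.2, p.1)) :=
      hF.comp_injective Prod.swap_injective
    have hFj : ∀ j, Summable fun m => F (m, j) := fun j => hFs.prod_factor j
    have hS : Summable fun j => ∑' m, F (m, j) :=
      ((summable_prod_of_nonneg (fun p => hFnonneg _)).1 hFs).2
    -- |D i j| ≤ S j
    have habs : ∀ j, |(∑' k, Toep a i k * Toep b k j) - Toep (zconv a b) i j|
        ≤ ∑' m, F (m, j) := by
      intro j
      rw [key i j, abs_neg]
      have hterm : ∀ n : ℕ, |a (-(n : ℤ) - 1 - i) * b ((j : ℤ) + n + 1)| = F (n, j) := by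
        intro n
        have e1 : (-(n : ℤ) - 1 - i) = (-(((n + i : ℕ) : ℤ)) - 1) := by push_cast; ring
        have e2 : ((j : ℤ) + n + 1) = (((j + (n + 1) : ℕ)) : ℤ) := by push_cast; ring
        rw [abs_mul, e1, e2]
      have hsum : Summable fun n : ℕ => |a (-(n : ℤ) - 1 - i) * b ((j : ℤ) + n + 1)| := by
        simp only [hterm]; exact hFj j
      have hnorm := norm_tsum_le_tsum_norm
        (f := fun n : ℕ => a (-(n : ℤ) - 1 - i) * b ((j : ℤ) + n + 1)) hsum
      simp only [Real.norm_eq_abs] at hnorm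
      calc |∑' n : ℕ, a (-(n : ℤ) - 1 - i) * b ((j : ℤ) + n + 1)|
          ≤ ∑' n : ℕ, |a (-(n : ℤ) - 1 - i) * b ((j : ℤ) + n + 1)| := hnorm
        _ = ∑' n, F (n, j) := tsum_congr hterm
    have hDsum : Summable fun j => |(∑' k, Toep a i k * Toep b k j) - Toep (zconv a b) i j| :=
      Summable.of_nonneg_of_le (fun j => abs_nonneg _) habs hS
    refine ⟨hDsum, ?_⟩
    have hcomm : ∑' j, ∑' m, F (m, j) = ∑' m, ∑' j, F (m, j) :=
      Summable.tsum_comm (f := fun m j => F (m, j)) hF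
    calc (∑' j, |(∑' k, Toep a i k * Toep b k j) - Toep (zconv a b) i j|)
        ≤ ∑' j, ∑' m, F (m, j) := Summable.tsum_le_tsum habs hDsum hS
      _ = ∑' m, ∑' j, F (m, j) := hcomm
      _ ≤ ∑' m, A (m + i) * Cb' := by
          refine Summable.tsum_le_tsum (fun m => ?_) hFrow2 (hArow.mul_right Cb')
          have : (∑' j, F (m, j)) = A (m + i) * ∑' j, B (j + (m + 1)) := by
            simp only [hFdef]; exact tsum_mul_left
          rw [this]
          exact mul_le_mul_of_nonneg_left (htail m) (abs_nonneg _)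
      _ = (∑' m, A (m + i)) * Cb' := tsum_mul_right
  -- assemble
  have hg : Tendsto (fun i => (∑' m, A (m + i))) atTop (𝓝 0) := by
    have h0 : (fun i => ∑' m, A (m + i))
        = fun i => (∑' m, A m) - ∑ m ∈ Finset.range i, A m := by
      funext i
      have := Summable.sum_add_tsum_nat_add (f := A) i hA
      linarith
    rw [h0]
    have := tendsto_const_nhds (x := ∑' m, A m) (f := atTop (α := ℕ)) |>.sub hA.hasSum.tendsto_sum_nat
    simpa using this
  refine ⟨fun i => (Hrow i).1, ?_⟩
  refine squeeze_zero (fun i => tsum_nonneg fun j => abs_nonneg _)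
    (fun i => (Hrow i).2) ?_
  simpa using hg.mul_const Cb'

/- STATEMENT 6: for Wiener-class sequences a, b with convolution c = a⋆b, both
T(a)T(b) − T(c) and T(b)T(a) − T(c) have the decay property. -/

theorem stmt6 (a b : ℤ → ℝ) (ha : Summable fun n => |a n|)
    (hb : Summable fun n => |b n|) :
    HasDecay (fun i j => (∑' k, Toep a i k * Toep b k j) - Toep (zconv a b) i j) ∧
    HasDecay (fun i j => (∑' k, Toep b i k * Toep a k j) - Toep (zconv a b) i j) := by
  refine ⟨mainDecay a b ha hb, ?_⟩
  rw [zconv_comm a b]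
  exact mainDecay b a hb ha
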